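/- arXiv:1502.05599 — 5 statements merged into one kernel-verified Lean document; each statement's English description precedes it below -/
import Mathlib

section
/- Zero-cost vertex elimination is correct: let v be a vertex of G, let G' be the graph obtained by deleting v, and define thresholds t'(u) = max{t(u) − w(v,u), 0} if (v,u) ∈ E and t'(u) = t(u) otherwise. Then for every S ⊆ V \ {v} and every τ ≥ 1, Influenced[S, τ] computed in G' equals Influenced[S ∪ {v}, τ] ∩ (V \ {v}) computed in G. -/
open scoped Classical

variable {V : Type*} [Fintype V] [DecidableEq V]

/-- The influence diffusion process: `influenced E w t S τ` is the set of vertices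
influenced within round `τ`, starting from target set `S`, in the directed graph with
edge relation `E`, edge weights `w`, and thresholds `t`. -/
noncomputable def influenced (E : V → V → Prop) (w : V → V → ℕ) (t : V → ℕ)
    (S : Finset V) : ℕ → Finset V
  | 0 => S
  | τ + 1 =>
      influenced E w t S τ ∪
        Finset.univ.filter (fun u =>
          t u ≤ ∑ v ∈ (influenced E w t S τ).filter (fun v => E v u), w v u)

/-! Since `v` is influenced from round `0` on, in every round it contributes exactly `w v u`
to the incoming weight of each out-neighbour `u`; lowering `t u` by that amount in advance
and deleting `v` therefore leaves every threshold comparison unchanged. Truncated subtraction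
is harmless: when `w v u ≥ t u` the vertex `u` is influenced after one round in both graphs. -/

theorem subset_influenced (E : V → V → Prop) (w : V → V → ℕ) (t : V → ℕ)
    (S : Finset V) (τ : ℕ) : S ⊆ influenced E w t S τ := by
  induction τ with
  | zero => exact subset_rfl
  | succ n ih => exact ih.trans Finset.subset_union_left

section

variable {α : Type*} [DecidableEq α]

theorem sum_filter_eq_sum_sdiff_add (E : α → α → Prop) (w : α → α → ℕ)
    {B : Finset α} {v : α} (hv : v ∈ B) (x : α) :
    ∑ b ∈ B.filter (fun b => E b x), w b x
      = ∑ b ∈ (B \ {v}).filter (fun b => E b x), w b x + if E v x then w v x else 0 := by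
  rw [Finset.sum_filter, Finset.sum_filter, Finset.sum_eq_sum_sdiff_singleton_add hv]

theorem sum_filter_subtype_eq (E : α → α → Prop) (w : α → α → ℕ) {p : α → Prop}
    (A : Finset {u // p u}) (x : α) :
    ∑ b ∈ A.filter (fun b => E b.val x), w b.val x
      = ∑ b ∈ (A.image Subtype.val).filter (fun b => E b x), w b x := by
  rw [Finset.filter_image, Finset.sum_image fun _ _ _ _ => Subtype.ext]

theorem reduced_threshold_le_iff (E : α → α → Prop) (w : α → α → ℕ) (t : α → ℕ)
    {v : α} {A : Finset {u // u ≠ v}} {B : Finset α} (hv : v ∈ B)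
    (hAB : A.image Subtype.val = B \ {v}) (x : α) :
    (if E v x then t x - w v x else t x) ≤ ∑ b ∈ A.filter (fun b => E b.val x), w b.val x
      ↔ t x ≤ ∑ b ∈ B.filter (fun b => E b x), w b x := by
  rw [sum_filter_subtype_eq, hAB, sum_filter_eq_sum_sdiff_add E w hv]
  split_ifs <;> omega

theorem image_val_filter_univ [Fintype α] {v : α} (Q : {u // u ≠ v} → Prop) (P : α → Prop)
    [DecidablePred Q] [DecidablePred P] (hQP : ∀ u, Q u ↔ P u.val) :
    (Finset.univ.filter Q).image Subtype.val = Finset.univ.filter P \ {v} := by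
  ext x
  simp only [Finset.mem_image, Finset.mem_filter, Finset.mem_univ, true_and,
    Finset.mem_sdiff, Finset.mem_singleton, hQP]
  exact ⟨fun ⟨u, hu, hux⟩ => hux ▸ ⟨hu, u.2⟩, fun ⟨hx, hxv⟩ => ⟨⟨x, hxv⟩, hx, rfl⟩⟩

theorem image_val_eq_insert_sdiff {v : α} (S' : Finset {u // u ≠ v}) :
    S'.image Subtype.val = insert v (S'.image Subtype.val) \ {v} := by
  rw [Finset.insert_sdiff_of_mem _ (Finset.mem_singleton_self v),
    Finset.sdiff_singleton_eq_erase, Finset.erase_eq_self.mpr]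
  simp

end

theorem zero_cost_elimination_general (E : V → V → Prop) (w : V → V → ℕ) (t : V → ℕ) (v : V)
    (S' : Finset {u : V // u ≠ v}) (τ : ℕ) :
    (influenced (fun a b : {u : V // u ≠ v} => E a.val b.val)
        (fun a b => w a.val b.val)
        (fun u => if E v u.val then t u.val - w v u.val else t u.val)
        S' τ).image Subtype.val
      = influenced E w t (insert v (S'.image Subtype.val)) τ \ {v} := by
  induction τ with
  | zero => exact image_val_eq_insert_sdiff S'
  | succ n ih =>
    have hv : v ∈ influenced E w t (insert v (S'.image Subtype.val)) n :=
      subset_influenced E w t _ n (Finset.mem_insert_self _ _)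
    simp only [influenced]
    rw [Finset.image_union, Finset.union_sdiff_distrib, ih]
    exact congrArg _ <|
      image_val_filter_univ _ _ fun u => reduced_threshold_le_iff E w t hv ih u

/-- Zero-cost vertex elimination: deleting a vertex `v` and decreasing the thresholds
of its out-neighbors by `w v ·` yields, for every target set avoiding `v` and every
`τ ≥ 1`, the same influenced set as adding `v` to the target set in the original graph
(restricted to the remaining vertices). -/
theorem zero_cost_elimination (E : V → V → Prop) (w : V → V → ℕ) (t : V → ℕ) (v : V)
    (S' : Finset {u : V // u ≠ v}) (τ : ℕ) (hτ : 1 ≤ τ) :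
    (influenced (fun a b : {u : V // u ≠ v} => E a.val b.val)
        (fun a b => w a.val b.val)
        (fun u => if E v u.val then t u.val - w v u.val else t u.val)
        S' τ).image Subtype.val
      = influenced E w t (insert v (S'.image Subtype.val)) τ \ {v} :=
  zero_cost_elimination_general E w t v S' τ
end

section
/- Weighted-clique simulation: given a graph G = (V,E) with |V| = n and thresholds t, form the complete graph K on V with weights w(u,v) = n+1 if {u,v} ∈ E and w(u,v) = 1 otherwise, and thresholds t'(v) = (n+1)·t(v). Then for every S ⊆ V and every τ ≥ 0, Influenced[S, τ] computed in G (with unit edge weights and thresholds t) equals Influenced[S, τ] computed in K (with weights w and thresholds t'). -/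
open scoped Classical

variable {V : Type*} [Fintype V] [DecidableEq V]

/-! Scaling by `n + 1` makes each edge of `G` outweigh all `≤ n` non-edges together, so the
weighted clique reaches `(n + 1) t(u)` exactly when `u` has `t(u)` influenced neighbours in `G`.
Only vertices not yet influenced need to be compared, and for such a vertex `u` the clique's
exclusion of `v = u` removes nothing from the sum. -/

open Finset

theorem le_iff_mul_le_mul_add {m b : ℕ} (hb : b < m) (t a : ℕ) :
    t ≤ a ↔ m * t ≤ m * a + b := by
  have hm : 0 < m := Nat.zero_lt_of_lt hb
  rw [mul_comm m t, ← Nat.le_div_iff_mul_le hm, Nat.mul_add_div hm, Nat.div_eq_of_lt hb,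
    add_zero]

theorem influenced_eq_of_activation_iff {E E' : V → V → Prop} {w w' : V → V → ℕ}
    {t t' : V → ℕ} (S : Finset V)
    (h : ∀ (A : Finset V) (u : V), u ∉ A →
      (t u ≤ ∑ v ∈ A.filter (E · u), w v u ↔ t' u ≤ ∑ v ∈ A.filter (E' · u), w' v u))
    (τ : ℕ) :
    influenced E w t S τ = influenced E' w' t' S τ := by
  induction τ with
  | zero => rfl
  | succ τ ih =>
    ext u
    simp only [influenced, ← ih, mem_union, mem_filter, mem_univ, true_and]
    by_cases hu : u ∈ influenced E w t S τ
    · simp only [hu, true_or]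
    · simp only [hu, false_or, h _ u hu]

theorem weighted_clique_simulation_general (E : V → V → Prop)
    (t : V → ℕ) (S : Finset V) (τ : ℕ) :
    influenced E (fun _ _ => 1) t S τ
      = influenced (fun u v : V => u ≠ v)
          (fun u v => if E u v then Fintype.card V + 1 else 1)
          (fun v => (Fintype.card V + 1) * t v) S τ := by
  refine influenced_eq_of_activation_iff S (fun A u hu => ?_) τ
  have hA : A.filter (· ≠ u) = A := filter_true_of_mem fun v hv hvu => hu (hvu ▸ hv)
  have hnonedges : #(A.filter (¬E · u)) < Fintype.card V + 1 :=
    Nat.lt_succ_of_le (card_le_univ _)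
  -- the clique's filter carries the classical `Decidable` instance, not the one in `hA`
  rw [filter_congr_decidable A (· ≠ u), hA]
  simp only [sum_ite, sum_const, smul_eq_mul, mul_one]
  rw [mul_comm _ (Fintype.card V + 1)]
  exact le_iff_mul_le_mul_add hnonedges _ _

/-- Weighted-clique simulation: the diffusion process in a graph `G` with unit weights
and thresholds `t` coincides with the process in the complete graph with weights `n+1`
on edges of `G` and `1` elsewhere, and thresholds `(n+1)·t`. -/
theorem weighted_clique_simulation (E : V → V → Prop) (hirr : ∀ u : V, ¬ E u u)
    (t : V → ℕ) (S : Finset V) (τ : ℕ) :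
    influenced E (fun _ _ => 1) t S τ
      = influenced (fun u v : V => u ≠ v)
          (fun u v => if E u v then Fintype.card V + 1 else 1)
          (fun v => (Fintype.card V + 1) * t v) S τ :=
  weighted_clique_simulation_general E t S τ
end

section
/- Knapsack reduction correctness: the star tree T (with leaves v_1,...,v_n pointing to center v_{n+1}, edge weights w(v_i, v_{n+1}) = p_i, thresholds t(v_i) = 0 and t(v_{n+1}) = P, costs c(v_i) = w_i and c(v_{n+1}) = W+1) admits a target set S ⊆ V of total cost at most W with Influenced[S,1] = V if and only if there exists a subset of indices I ⊆ {1,...,n} with Σ_{i∈I} w_i ≤ W and Σ_{i∈I} p_i ≥ P. -/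
/-!
A target set of cost at most `W` cannot contain the center, whose cost is `W + 1`, so it is the
image of a set `I` of leaves. Leaves have threshold `0` and are influenced in any case, while the
center is influenced after one round exactly when the arc weights from `I`, that is
`∑ i ∈ I, p i`, reach its threshold `P`. The cost of the target set is `∑ i ∈ I, wt i`.
-/

open scoped Classical

variable {V : Type*} [Fintype V] [DecidableEq V]

section Influence

variable {E : V → V → Prop} {w : V → V → ℕ} {t : V → ℕ} {S : Finset V}

@[simp]
theorem influenced_zero : influenced E w t S 0 = S := rfl

theorem mem_influenced_succ_iff {τ : ℕ} {u : V} :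
    u ∈ influenced E w t S (τ + 1) ↔
      u ∈ influenced E w t S τ ∨ t u ≤ ∑ v ∈ (influenced E w t S τ).filter (E · u), w v u := by
  rw [influenced, Finset.mem_union, Finset.mem_filter]
  simp only [Finset.mem_univ, true_and]

end Influence

namespace Fin

theorem exists_eq_map_castSuccEmb_of_last_notMem {n : ℕ} {S : Finset (Fin (n + 1))}
    (h : last n ∉ S) : ∃ I : Finset (Fin n), S = I.map castSuccEmb := by
  have hS : S ⊆ Finset.univ.map castSuccEmb := by
    rw [← Iio_last_eq_map]
    exact fun v hv => Finset.mem_Iio.2 (lt_last_iff_ne_last.2 fun hv' => h (hv' ▸ hv))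
  obtain ⟨I, -, rfl⟩ := Finset.subset_map_iff.1 hS
  exact ⟨I, rfl⟩

theorem last_notMem_of_sum_snoc_le {n c : ℕ} {f : Fin n → ℕ} {S : Finset (Fin (n + 1))}
    (h : ∑ v ∈ S, snoc (α := fun _ => ℕ) f (c + 1) v ≤ c) : last n ∉ S := fun hS => by
  have := (Finset.single_le_sum (fun _ _ => Nat.zero_le _) hS).trans h
  simp at this

theorem sum_map_castSuccEmb_snoc {n : ℕ} {M : Type*} [AddCommMonoid M] (f : Fin n → M) (c : M)
    (I : Finset (Fin n)) :
    ∑ v ∈ I.map castSuccEmb, snoc (α := fun _ => M) f c v = ∑ i ∈ I, f i := by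
  simp

end Fin

theorem star_influenced_one_eq_univ_iff {n P : ℕ} (p : Fin n → ℕ) {S : Finset (Fin (n + 1))} :
    influenced (fun a b : Fin (n + 1) => (a : ℕ) < n ∧ (b : ℕ) = n)
        (fun a _ => Fin.snoc (α := fun _ => ℕ) p 0 a)
        (fun u => if (u : ℕ) = n then P else 0) S 1 = Finset.univ ↔
      Fin.last n ∈ S ∨ P ≤ ∑ v ∈ S, Fin.snoc (α := fun _ => ℕ) p 0 v := by
  have hsum : ∑ v ∈ S.filter (fun v : Fin (n + 1) => (v : ℕ) < n),
      Fin.snoc (α := fun _ => ℕ) p 0 v = ∑ v ∈ S, Fin.snoc (α := fun _ => ℕ) p 0 v := by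
    refine Finset.sum_filter_of_ne fun v _ hv => ?_
    by_contra hlt
    exact hv (by simp [Fin.snoc, hlt])
  simp only [Finset.eq_univ_iff_forall, mem_influenced_succ_iff, influenced_zero]
  constructor
  · intro h
    exact (h (Fin.last n)).imp id fun hP => by simpa [hsum] using hP
  · intro h u
    by_cases hu : (u : ℕ) = n
    · obtain rfl : u = Fin.last n := Fin.ext hu
      exact h.imp id fun hP => by simpa [hsum] using hP
    · simp [hu]

-- `Fin.snoc f c` unfolds to the function `v ↦ if h : v < n then f ⟨v, h⟩ else c` of the statement.
/-- Knapsack reduction correctness for the star tree: leaves `v_1,…,v_n` (thresholds 0,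
costs `wt i`) point to the center `v_{n+1}` (threshold `P`, cost `W+1`) with arc weights
`p i`. There is a target set of cost at most `W` influencing everything in one round iff
the knapsack instance has a solution. -/
theorem knapsack_reduction (n : ℕ) (p wt : Fin n → ℕ) (W P : ℕ) :
    (∃ S : Finset (Fin (n + 1)),
      (∑ v ∈ S, (if h : (v : ℕ) < n then wt ⟨v, h⟩ else W + 1)) ≤ W ∧
      influenced (fun a b : Fin (n + 1) => (a : ℕ) < n ∧ (b : ℕ) = n)
        (fun a _ => if h : (a : ℕ) < n then p ⟨a, h⟩ else 0)
        (fun u => if (u : ℕ) = n then P else 0) S 1 = Finset.univ)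
    ↔ ∃ I : Finset (Fin n), (∑ i ∈ I, wt i) ≤ W ∧ P ≤ ∑ i ∈ I, p i := by
  constructor
  · rintro ⟨S, hcost, hinf⟩
    have hlast : Fin.last n ∉ S := Fin.last_notMem_of_sum_snoc_le hcost
    obtain ⟨I, rfl⟩ := Fin.exists_eq_map_castSuccEmb_of_last_notMem hlast
    have hP := ((star_influenced_one_eq_univ_iff p).1 hinf).resolve_left hlast
    exact ⟨I, (Fin.sum_map_castSuccEmb_snoc wt (W + 1) I).symm.trans_le hcost,
      hP.trans_eq (Fin.sum_map_castSuccEmb_snoc p 0 I)⟩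
  · rintro ⟨I, hw, hp⟩
    exact ⟨I.map Fin.castSuccEmb, (Fin.sum_map_castSuccEmb_snoc wt (W + 1) I).trans_le hw,
      (star_influenced_one_eq_univ_iff p).2
        (Or.inr (hp.trans_eq (Fin.sum_map_castSuccEmb_snoc p 0 I).symm))⟩
end

section
/- Early activation of a tree vertex's parent can be simulated by threshold reduction: let v be a non-root vertex of a rooted tree with parent p(v), and let t'(v) = max{t(v) − w(p(v), v), 0}. If S ⊆ V(T(v)) contains v's parent's influence from round 1 onward (i.e., we run the process in T(v) with v's threshold replaced by t'(v) starting from round 1), this is equivalent to running the process in T(v) ∪ {p(v)} with target set S ∪ {p(v)} restricted to T(v). Formally: for every S ⊆ V(T(v)) and τ ≥ 1, Influenced[S ∪ {p(v)}, τ] ∩ V(T(v)) computed in the tree induced on V(T(v)) ∪ {p(v)} equals Influenced'[S, τ] computed in T(v) with threshold t'(v) at v and original thresholds elsewhere. -/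
/-!
Only `v` has a neighbour outside `T(v)` in the induced tree, namely `p(v)`: any other
neighbour of `p(v)` inside `T(v)` would close a cycle. Since `p(v)` is influenced from
round 0 on, the vertex `v` always receives the extra weight `w(p(v), v)` from it, which is
exactly what lowering its threshold by that amount accounts for; every other vertex of
`T(v)` sees the same neighbourhood in both processes. Induction on the round then shows
that the two processes agree on `T(v)`.
-/

open scoped Classical

variable {V : Type*} [Fintype V] [DecidableEq V]

/-- `inSubtree G p v x` means `x` lies in the connected component of `v` after deleting
the parent `p` of `v` from the tree `G`, i.e. in the subtree `T(v)`. -/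
def inSubtree (G : SimpleGraph V) (p v x : V) : Prop :=
  Relation.ReflTransGen (fun a b => G.Adj a b ∧ a ≠ p ∧ b ≠ p) v x

lemma mem_influenced_of_mem (E : V → V → Prop) (w : V → V → ℕ) (t : V → ℕ)
    {S : Finset V} {x : V} (hx : x ∈ S) : ∀ τ, x ∈ influenced E w t S τ
  | 0 => hx
  | τ + 1 => Finset.mem_union_left _ (mem_influenced_of_mem E w t hx τ)

theorem influenced_inter_eq_of_activation_iff {E₁ E₂ : V → V → Prop} {w₁ w₂ : V → V → ℕ}
    {t₁ t₂ : V → ℕ} {S₁ S₂ U : Finset V} (h₀ : S₁ ∩ U = S₂ ∩ U)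
    (hstep : ∀ τ, influenced E₁ w₁ t₁ S₁ τ ∩ U = influenced E₂ w₂ t₂ S₂ τ ∩ U → ∀ u ∈ U,
      (t₁ u ≤ ∑ y ∈ (influenced E₁ w₁ t₁ S₁ τ).filter (E₁ · u), w₁ y u ↔
        t₂ u ≤ ∑ y ∈ (influenced E₂ w₂ t₂ S₂ τ).filter (E₂ · u), w₂ y u)) :
    ∀ τ, influenced E₁ w₁ t₁ S₁ τ ∩ U = influenced E₂ w₂ t₂ S₂ τ ∩ U
  | 0 => h₀
  | τ + 1 => by
    have ih := influenced_inter_eq_of_activation_iff h₀ hstep τ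
    ext u
    by_cases hu : u ∈ U
    · have hmem := congrArg (u ∈ ·) ih
      simp only [Finset.mem_inter, hu, and_true, eq_iff_iff] at hmem
      simp only [influenced, Finset.mem_inter, Finset.mem_union, Finset.mem_filter,
        Finset.mem_univ, true_and, hu, and_true, hmem, hstep τ ih u hu]
    · simp [hu]

namespace inSubtree

omit [Fintype V] [DecidableEq V]

variable {G : SimpleGraph V} {p v x : V}

lemma ne_parent (hpv : p ≠ v) (h : inSubtree G p v x) : x ≠ p := by
  induction h with
  | refl => exact hpv.symm
  | tail _ hstep => exact hstep.2.2

lemma exists_walk_avoiding_parent (hpv : p ≠ v) (hx : inSubtree G p v x) :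
    ∃ W : G.Walk v x, p ∉ W.support := by
  induction hx with
  | refl => exact ⟨.nil, by simpa using hpv⟩
  | tail _ hstep ih =>
    obtain ⟨W, hW⟩ := ih
    refine ⟨W.concat hstep.1, ?_⟩
    simpa [SimpleGraph.Walk.support_concat, hW] using hstep.2.2.symm

lemma eq_of_adj_parent (hT : G.IsTree) (hadj : G.Adj p v) (hx : inSubtree G p v x)
    (hpx : G.Adj p x) : x = v := by
  obtain ⟨W, hW⟩ := hx.exists_walk_avoiding_parent hadj.ne
  have hbypass : p ∉ W.bypass.support := fun h => hW (W.support_bypass_subset_support h)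
  have hpaths := (hT.isAcyclic.subsingleton_path p x).elim (SimpleGraph.Path.singleton hpx)
    ⟨.cons hadj W.bypass, W.bypass_isPath.cons hbypass⟩
  simpa [SimpleGraph.Path.singleton, SimpleGraph.Walk.getVert] using
    congrArg (fun P : G.Path p x => P.1.getVert 1) hpaths

end inSubtree

section ParentSimulation

variable {G : SimpleGraph V} {p v : V} {A B : Finset V}

variable (G p v) in
def closedSubtreeAdj (a b : V) : Prop :=
  G.Adj a b ∧ (inSubtree G p v a ∨ a = p) ∧ (inSubtree G p v b ∨ b = p)

variable (G p v) in
def subtreeAdj (a b : V) : Prop :=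
  G.Adj a b ∧ inSubtree G p v a ∧ inSubtree G p v b

local notation "U" => Finset.univ.filter (inSubtree G p v)

lemma mem_iff_of_inter_subtree_eq (hAB : A ∩ U = B ∩ U) {y : V} (hy : inSubtree G p v y) :
    y ∈ A ↔ y ∈ B := by
  simpa [hy] using congrArg (y ∈ ·) hAB

lemma filter_closedSubtreeAdj_self (hadj : G.Adj p v) (hpA : p ∈ A) (hAB : A ∩ U = B ∩ U) :
    A.filter (closedSubtreeAdj G p v · v) = insert p (B.filter (subtreeAdj G p v · v)) := by
  ext y
  simp only [Finset.mem_filter, Finset.mem_insert]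
  constructor
  · rintro ⟨hyA, hyv, hy | rfl, -⟩
    · exact Or.inr ⟨(mem_iff_of_inter_subtree_eq hAB hy).mp hyA, hyv, hy, .refl⟩
    · exact Or.inl rfl
  · rintro (rfl | ⟨hyB, hyv, hy, -⟩)
    · exact ⟨hpA, hadj, Or.inr rfl, Or.inl .refl⟩
    · exact ⟨(mem_iff_of_inter_subtree_eq hAB hy).mpr hyB, hyv, Or.inl hy, Or.inl .refl⟩

lemma filter_closedSubtreeAdj_of_ne (hT : G.IsTree) (hadj : G.Adj p v) (hAB : A ∩ U = B ∩ U)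
    {u : V} (hu : inSubtree G p v u) (huv : u ≠ v) :
    A.filter (closedSubtreeAdj G p v · u) = B.filter (subtreeAdj G p v · u) := by
  ext y
  simp only [Finset.mem_filter]
  constructor
  · rintro ⟨hyA, hyu, hy | rfl, -⟩
    · exact ⟨(mem_iff_of_inter_subtree_eq hAB hy).mp hyA, hyu, hy, hu⟩
    · exact absurd (hu.eq_of_adj_parent hT hadj hyu) huv
  · rintro ⟨hyB, hyu, hy, -⟩
    exact ⟨(mem_iff_of_inter_subtree_eq hAB hy).mpr hyB, hyu, Or.inl hy, Or.inl hu⟩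

lemma activation_iff_reduced_threshold (hT : G.IsTree) (w : V → V → ℕ) (t : V → ℕ)
    (hadj : G.Adj p v) (hpA : p ∈ A) (hAB : A ∩ U = B ∩ U) {u : V}
    (hu : inSubtree G p v u) :
    t u ≤ ∑ y ∈ A.filter (closedSubtreeAdj G p v · u), w y u ↔
      (if u = v then t v - w p v else t u) ≤ ∑ y ∈ B.filter (subtreeAdj G p v · u), w y u := by
  by_cases huv : u = v
  · subst u
    have hp : p ∉ B.filter (subtreeAdj G p v · v) := fun h =>
      (Finset.mem_filter.mp h).2.2.1.ne_parent hadj.ne rfl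
    rw [filter_closedSubtreeAdj_self hadj hpA hAB, Finset.sum_insert hp, if_pos rfl,
      tsub_le_iff_left]
  · rw [filter_closedSubtreeAdj_of_ne hT hadj hAB hu huv, if_neg huv]

end ParentSimulation

theorem parent_simulation_general (G : SimpleGraph V) (hT : G.IsTree)
    (w : V → V → ℕ) (t : V → ℕ) (p v : V) (hadj : G.Adj p v)
    (S : Finset V) (τ : ℕ) :
    influenced
        (fun a b => G.Adj a b ∧ (inSubtree G p v a ∨ a = p) ∧ (inSubtree G p v b ∨ b = p))
        w t (insert p S) τ ∩ Finset.univ.filter (inSubtree G p v)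
      = influenced (fun a b => G.Adj a b ∧ inSubtree G p v a ∧ inSubtree G p v b)
          w (fun x => if x = v then t v - w p v else t x) S τ
        ∩ Finset.univ.filter (inSubtree G p v) := by
  have hp : ¬ inSubtree G p v p := fun h => h.ne_parent hadj.ne rfl
  refine influenced_inter_eq_of_activation_iff ?_ (fun τ hagree u hu => ?_) τ
  · rw [Finset.insert_inter_of_notMem (by simpa using hp)]
  · exact activation_iff_reduced_threshold hT w t hadj
      (mem_influenced_of_mem _ w t (Finset.mem_insert_self p S) τ) hagree
      (Finset.mem_filter.mp hu).2

/-- Early activation of a vertex's parent can be simulated by threshold reduction: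
running the process in the tree induced on `T(v) ∪ {p(v)}` with `p(v)` in the target set
yields, on `T(v)` and for every `τ ≥ 1`, the same influenced sets as running the process
in `T(v)` alone with the threshold of `v` reduced to `t(v) - w(p(v), v)` (truncated). -/
theorem parent_simulation (G : SimpleGraph V) (hT : G.IsTree)
    (w : V → V → ℕ) (t : V → ℕ) (p v : V) (hadj : G.Adj p v)
    (S : Finset V) (hS : ∀ x ∈ S, inSubtree G p v x) (τ : ℕ) (hτ : 1 ≤ τ) :
    influenced
        (fun a b => G.Adj a b ∧ (inSubtree G p v a ∨ a = p) ∧ (inSubtree G p v b ∨ b = p))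
        w t (insert p S) τ ∩ Finset.univ.filter (inSubtree G p v)
      = influenced (fun a b => G.Adj a b ∧ inSubtree G p v a ∧ inSubtree G p v b)
          w (fun x => if x = v then t v - w p v else t x) S τ
        ∩ Finset.univ.filter (inSubtree G p v) :=
  parent_simulation_general G hT w t p v hadj S τ
end

section
/- Cycle-to-path reduction correctness: let C_n be a weighted cycle, fix a vertex v_i, and form the path P = C_n − v_i with thresholds of the two neighbors v_{i−1}, v_{i+1} reduced to t'(v_j) = max{t(v_j) − w(v_i, v_j), 0} and all other thresholds unchanged. Then for every S ⊆ V(C_n) \ {v_i} and every τ ≥ 1, Influenced[S ∪ {v_i}, τ] ∩ (V(C_n) \ {v_i}) computed in C_n equals Influenced'[S, τ] computed in P with the reduced thresholds. -/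
open scoped Classical

variable {V : Type*} [Fintype V] [DecidableEq V]

/-!
Once `v_i` is influenced it stays influenced, so from then on every other vertex adjacent
from `v_i` permanently receives `w(v_i, u)` from it. Deleting `v_i` and lowering the
threshold of such a `u` by exactly that amount leaves every activation test of a vertex
`u ≠ v_i` unchanged, so both processes agree off `v_i` round by round. The argument works
for any weighted digraph, not only for cycles.
-/

open Finset

namespace Influence

theorem le_ite_add_iff_of_eq_sub {p : Prop} [Decidable p] {a b c : ℕ}
    (h_pos : p → b = a - c) (h_neg : ¬p → b = a) (s : ℕ) :
    a ≤ (if p then c else 0) + s ↔ b ≤ s := by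
  by_cases hp : p
  · rw [if_pos hp, h_pos hp, Nat.sub_le_iff_le_add']
  · rw [if_neg hp, h_neg hp, zero_add]

def deleteVertex (E : V → V → Prop) (i : V) : V → V → Prop :=
  fun j k => E j k ∧ j ≠ i ∧ k ≠ i

theorem subset_influenced (E : V → V → Prop) (w : V → V → ℕ) (t : V → ℕ) (S : Finset V) :
    ∀ τ, S ⊆ influenced E w t S τ
  | 0 => subset_rfl
  | τ + 1 => (subset_influenced E w t S τ).trans subset_union_left

omit [Fintype V] in
theorem sum_filter_eq_ite_add_sum_filter_erase (E : V → V → Prop) (w : V → V → ℕ)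
    {A : Finset V} {i : V} (hi : i ∈ A) (u : V) :
    ∑ v ∈ A.filter (fun v => E v u), w v u
      = (if E i u then w i u else 0) + ∑ v ∈ (A.erase i).filter (fun v => E v u), w v u := by
  rw [sum_filter, sum_filter, ← add_sum_erase _ _ hi]

omit [Fintype V] in
theorem filter_deleteVertex_eq (E : V → V → Prop) {A B : Finset V} {i u : V}
    (hAB : A.erase i = B.erase i) (hu : u ≠ i) :
    B.filter (fun v => deleteVertex E i v u) = (A.erase i).filter (fun v => E v u) := by
  rw [hAB]
  ext v
  rw [mem_filter, mem_filter, mem_erase, deleteVertex]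
  tauto

theorem erase_influenced_insert_eq_deleteVertex {E : V → V → Prop} {w : V → V → ℕ}
    {t t' : V → ℕ} {i : V}
    (ht'_adj : ∀ u, E i u → t' u = t u - w i u) (ht'_nadj : ∀ u, ¬E i u → t' u = t u)
    {S : Finset V} (hiS : i ∉ S) :
    ∀ τ, (influenced E w t (insert i S) τ).erase i
      = (influenced (deleteVertex E i) w t' S τ).erase i
  | 0 => by rw [influenced, influenced, erase_insert hiS, erase_eq_of_notMem hiS]
  | τ + 1 => by
    have hAB := erase_influenced_insert_eq_deleteVertex ht'_adj ht'_nadj hiS τ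
    have hiA : i ∈ influenced E w t (insert i S) τ :=
      subset_influenced E w t _ τ (mem_insert_self i S)
    rw [influenced, influenced, erase_union_distrib, erase_union_distrib, hAB]
    congr 1
    ext u
    simp only [mem_erase, mem_filter, mem_univ, true_and]
    refine and_congr_right fun hu => ?_
    rw [sum_filter_eq_ite_add_sum_filter_erase E w hiA, filter_deleteVertex_eq E hAB hu]
    exact le_ite_add_iff_of_eq_sub (ht'_adj u) (ht'_nadj u) _

end Influence

theorem cycle_to_path_general (n : ℕ) [NeZero n]
    (w : Fin n → Fin n → ℕ) (t : Fin n → ℕ) (i : Fin n)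
    (S : Finset (Fin n)) (hiS : i ∉ S) (τ : ℕ) :
    (influenced (fun j k : Fin n => k = j + 1 ∨ j = k + 1) w t (insert i S) τ).erase i
      = (influenced (fun j k : Fin n => (k = j + 1 ∨ j = k + 1) ∧ j ≠ i ∧ k ≠ i) w
          (fun j => if (j = i + 1 ∨ i = j + 1) then t j - w i j else t j) S τ).erase i :=
  Influence.erase_influenced_insert_eq_deleteVertex (fun _ h => if_pos h) (fun _ h => if_neg h)
    hiS τ

/-- Cycle-to-path reduction correctness: deleting a vertex `v_i` of the cycle `C_n` and
reducing the thresholds of its two neighbors by the weights of the arcs from `v_i`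
yields, for target sets containing `v_i` and every `τ ≥ 1`, the same influenced sets on
the remaining vertices. -/
theorem cycle_to_path (n : ℕ) [NeZero n] (hn : 3 ≤ n)
    (w : Fin n → Fin n → ℕ) (t : Fin n → ℕ) (i : Fin n)
    (S : Finset (Fin n)) (hiS : i ∉ S) (τ : ℕ) (hτ : 1 ≤ τ) :
    (influenced (fun j k : Fin n => k = j + 1 ∨ j = k + 1) w t (insert i S) τ).erase i
      = (influenced (fun j k : Fin n => (k = j + 1 ∨ j = k + 1) ∧ j ≠ i ∧ k ≠ i) w
          (fun j => if (j = i + 1 ∨ i = j + 1) then t j - w i j else t j) S τ).erase i :=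
  cycle_to_path_general n w t i S hiS τ
end
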